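/- Let n ≥ 1 and let g be holomorphic on the open unit ball B of ℂⁿ. The multiplication operator M_g, defined by M_g f(z) = g(z)·f(z), is bounded on the Zygmund space Z (i.e. there exists C > 0 such that fg ∈ Z and ‖fg‖ ≤ C‖f‖ for all f ∈ Z) if and only if g belongs to Z, i.e. sup_{z∈B}(1-|z|²)|R(Rg)(z)| < ∞. -/

import Mathlib

open MeasureTheory Metric Filter

noncomputable section

/-- `E n` is `ℂⁿ` with the Euclidean structure. -/
abbrev E (n : ℕ) := EuclideanSpace ℂ (Fin n)

/-- The open unit ball of `ℂⁿ`. -/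
def uball (n : ℕ) : Set (E n) := Metric.ball 0 1

/-- The radial derivative `Rf(z) = ∑ z_j ∂f/∂z_j(z)`. -/
def rad (n : ℕ) (f : E n → ℂ) (z : E n) : ℂ :=
  ∑ j : Fin n, z j * fderiv ℂ f z (EuclideanSpace.single j 1)

/-- The set of values `(1-|z|²)|R(Rf)(z)|`, `z ∈ B`. -/
def zygSet (n : ℕ) (f : E n → ℂ) : Set ℝ :=
  {x | ∃ z ∈ uball n, x = (1 - ‖z‖ ^ 2) * ‖rad n (rad n f) z‖}

/-- Membership in the Zygmund space: `sup_{z∈B} (1-|z|²)|R(Rf)(z)| < ∞`. -/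
def memZ (n : ℕ) (f : E n → ℂ) : Prop := BddAbove (zygSet n f)

/-- The Zygmund norm `‖f‖ = |f(0)| + sup_{z∈B} (1-|z|²)|R(Rf)(z)|`. -/
def zygNorm (n : ℕ) (f : E n → ℂ) : ℝ :=
  ‖f 0‖ + sSup (zygSet n f)

/-- The extended Cesàro operator `T_g f(z) = ∫₀¹ f(tz) Rg(tz) dt/t`. -/
def Tg (n : ℕ) (g f : E n → ℂ) (z : E n) : ℂ :=
  ∫ t in (0:ℝ)..1, f (t • z) * rad n g (t • z) / (t : ℂ)

/-- The operator `I_g f(z) = ∫₀¹ Rf(tz) g(tz) dt/t`. -/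
def Ig (n : ℕ) (g f : E n → ℂ) (z : E n) : ℂ :=
  ∫ t in (0:ℝ)..1, rad n f (t • z) * g (t • z) / (t : ℂ)

/-!
If `g ∈ 𝒵`, integrating `R²g` and then `Rg` along radii gives `|Rg(z)| ≲ (1 - |z|)^{-1/2}` and
`|g| ≲ |g(0)| + sup (1 - |z|²)|R²g|`. By the Leibniz rule `R²(gf) = g R²f + 2 Rg Rf + f R²g`,
each term of `(1 - |z|²) R²(gf)` is then bounded by the Zygmund norms of `f` and `g`, the
middle one because `(1 - |z|²)(1 - |z|)^{-1} ≤ 2`. Conversely `M_g 1 = g`.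

The only several-variable input is that directional derivatives of a holomorphic function are
holomorphic: on each complex line they are given by the Cauchy integral formula, which can be
differentiated under the integral sign.
-/

open Complex Real Topology Set

section Holomorphic

variable {V W : Type*} [NormedAddCommGroup V] [NormedSpace ℂ V]
  [NormedAddCommGroup W] [NormedSpace ℂ W]

theorem hasDerivAt_comp_add_smul {f : V → W} {w v : V} {a : ℂ}
    (hf : DifferentiableAt ℂ f (w + a • v)) :
    HasDerivAt (fun b : ℂ => f (w + b • v)) (fderiv ℂ f (w + a • v) v) a := by
  have := hf.hasFDerivAt.comp_hasDerivAt a (((hasDerivAt_id a).smul_const v).const_add w)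
  rwa [one_smul] at this

theorem fderiv_apply_eq_circleIntegral [CompleteSpace W] {f : V → W} {w v : V} {ρ : ℝ}
    (hρ : 0 < ρ) (hf : ∀ ζ ∈ closedBall (0 : ℂ) ρ, DifferentiableAt ℂ f (w + ζ • v)) :
    fderiv ℂ f w v = (2 * π * I)⁻¹ • ∮ ζ in C(0, ρ), (1 / ζ ^ 2) • f (w + ζ • v) := by
  have hslice : DifferentiableOn ℂ (fun ζ : ℂ => f (w + ζ • v)) (closedBall 0 ρ) := fun ζ hζ =>
    (hasDerivAt_comp_add_smul (hf ζ hζ)).differentiableAt.differentiableWithinAt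
  have h0 : DifferentiableAt ℂ f (w + (0 : ℂ) • v) := hf 0 (mem_closedBall_self hρ.le)
  have hcauchy := hslice.deriv_eq_smul_circleIntegral hρ
  rw [(hasDerivAt_comp_add_smul h0).deriv] at hcauchy
  simp only [sub_zero, zero_smul, add_zero] at hcauchy
  rw [hcauchy, smul_smul, inv_mul_cancel₀ (by simp [Real.pi_ne_zero]), one_smul]

theorem differentiableAt_circleIntegral_comp_add_smul [FiniteDimensional ℂ V]
    [FiniteDimensional ℂ W] {f : V → W} {z v : V} {ρ r K : ℝ} (hρ : 0 < ρ) (hr : 0 < r)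
    (hf : ∀ w ∈ ball z r, ∀ ζ ∈ sphere (0 : ℂ) ρ, DifferentiableAt ℂ f (w + ζ • v))
    (hK : ∀ w ∈ ball z r, ∀ ζ ∈ sphere (0 : ℂ) ρ, ‖fderiv ℂ f (w + ζ • v)‖ ≤ K) :
    DifferentiableAt ℂ (fun w => ∮ ζ in C(0, ρ), (1 / ζ ^ 2) • f (w + ζ • v)) z := by
  set γ := circleMap (0 : ℂ) ρ
  set c : ℝ → ℂ := fun θ => deriv γ θ * (1 / γ θ ^ 2)
  have hγ : ∀ θ, γ θ ∈ sphere (0 : ℂ) ρ := fun θ => circleMap_mem_sphere 0 hρ.le θ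
  have hc : Continuous c := by
    simp only [c, γ, deriv_circleMap]
    exact (continuous_circleMap 0 ρ).mul continuous_const |>.mul <|
      continuous_const.div ((continuous_circleMap 0 ρ).pow 2)
        fun θ => pow_ne_zero 2 (circleMap_ne_center hρ.ne')
  have hcont : ∀ w ∈ ball z r, Continuous fun θ => f (w + γ θ • v) := fun w hw =>
    continuous_iff_continuousAt.2 fun θ =>
      (hf w hw _ (hγ θ)).continuousAt.comp (f := fun θ => w + γ θ • v) (by fun_prop)
  borelize V
  simp only [circleIntegral, smul_smul]
  refine (intervalIntegral.hasFDerivAt_integral_of_dominated_of_fderiv_le (𝕜 := ℂ)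
    (F' := fun w θ => c θ • fderiv ℂ f (w + γ θ • v)) (bound := fun θ => ‖c θ‖ * K)
    (ball_mem_nhds z hr) ?_ ?_ ?_ ?_ ?_ ?_).differentiableAt
  · filter_upwards [ball_mem_nhds z hr] with w hw
    exact (hc.smul (hcont w hw)).aestronglyMeasurable
  · exact (hc.smul (hcont z (mem_ball_self hr))).intervalIntegrable _ _
  · exact hc.aestronglyMeasurable.smul ((measurable_fderiv ℂ f).comp
      (continuous_const.add ((continuous_circleMap 0 ρ).smul continuous_const)).measurable
      ).aestronglyMeasurable
  · refine Eventually.of_forall fun θ _ w hw => ?_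
    rw [norm_smul]
    exact mul_le_mul_of_nonneg_left (hK w hw _ (hγ θ)) (norm_nonneg _)
  · exact (hc.norm.mul continuous_const).intervalIntegrable _ _
  · refine Eventually.of_forall fun θ _ w hw => ?_
    exact ((hf w hw _ (hγ θ)).hasFDerivAt.comp w ((hasFDerivAt_id w).add_const _)).const_smul _

theorem DifferentiableOn.exists_ball_norm_fderiv_le {f : V → W} {U : Set V}
    (hf : DifferentiableOn ℂ f U) (hU : IsOpen U) {z : V} (hz : z ∈ U) :
    ∃ r > 0, ∃ K, ∀ x ∈ ball z r, DifferentiableAt ℂ f x ∧ ‖fderiv ℂ f x‖ ≤ K := by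
  obtain ⟨r, hr, hrU⟩ : ∃ r > 0, ∀ x ∈ ball z (2 * r), x ∈ U ∧ ‖f x - f z‖ ≤ 1 := by
    have hnear : ∀ᶠ x in 𝓝 z, x ∈ U ∧ ‖f x - f z‖ ≤ 1 :=
      Filter.Eventually.and (hU.mem_nhds hz) <| by
        simpa [← dist_eq_norm] using (hf.continuousOn.continuousAt (hU.mem_nhds hz)).eventually
          (closedBall_mem_nhds (f z) one_pos)
    obtain ⟨ε, hε, hball⟩ := Metric.eventually_nhds_iff_ball.1 hnear
    exact ⟨ε / 2, by positivity, fun x hx => hball x (by rwa [mul_div_cancel₀ _ two_ne_zero] at hx)⟩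
  refine ⟨r, hr, 2 / r, fun x hx => ?_⟩
  have hsub : ball x r ⊆ ball z (2 * r) := ball_subset_ball' (by rw [mem_ball] at hx; linarith)
  have hxU : x ∈ U := (hrU x (hsub (mem_ball_self hr))).1
  -- Cauchy estimate: `f` varies by at most `2` on `ball x r`.
  have hmaps : MapsTo f (ball x r) (closedBall (f x) 2) := fun y hy => by
    rw [mem_closedBall, dist_eq_norm, ← sub_sub_sub_cancel_right _ _ (f z)]
    linarith [norm_sub_le (f y - f z) (f x - f z), (hrU y (hsub hy)).2,
      (hrU x (hsub (mem_ball_self hr))).2]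
  exact ⟨hf.differentiableAt (hU.mem_nhds hxU), norm_fderiv_le_div_of_mapsTo_ball
    (hf.mono fun y hy => (hrU y (hsub hy)).1) hmaps hr⟩

theorem DifferentiableOn.differentiableAt_fderiv_apply [FiniteDimensional ℂ V]
    [FiniteDimensional ℂ W] {f : V → W} {U : Set V} (hf : DifferentiableOn ℂ f U)
    (hU : IsOpen U) {z : V} (hz : z ∈ U) (v : V) :
    DifferentiableAt ℂ (fun w => fderiv ℂ f w v) z := by
  obtain ⟨r, hr, K, hK⟩ := hf.exists_ball_norm_fderiv_le hU hz
  set ρ := r / 2 / (‖v‖ + 1)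
  have hρ : 0 < ρ := by positivity
  have hmem : ∀ w ∈ ball z (r / 2), ∀ ζ ∈ closedBall (0 : ℂ) ρ, w + ζ • v ∈ ball z r := by
    intro w hw ζ hζ
    rw [mem_closedBall_zero_iff] at hζ
    have hζv : ‖ζ • v‖ ≤ r / 2 := by
      rw [norm_smul]
      calc ‖ζ‖ * ‖v‖ ≤ ρ * (‖v‖ + 1) := by gcongr; linarith
        _ = r / 2 := div_mul_cancel₀ _ (by positivity)
    rw [mem_ball, dist_eq_norm, add_sub_right_comm] at *
    linarith [norm_add_le (w - z) (ζ • v)]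
  have hint := differentiableAt_circleIntegral_comp_add_smul hρ (half_pos hr)
    (fun w hw ζ hζ => (hK _ (hmem w hw ζ (sphere_subset_closedBall hζ))).1)
    (fun w hw ζ hζ => (hK _ (hmem w hw ζ (sphere_subset_closedBall hζ))).2)
  refine (hint.const_smul (2 * π * I)⁻¹).congr_of_eventuallyEq ?_
  filter_upwards [ball_mem_nhds z (half_pos hr)] with w hw
  exact fderiv_apply_eq_circleIntegral hρ fun ζ hζ => (hK _ (hmem w hw ζ hζ)).1

end Holomorphic

theorem intervalIntegrable_one_sub_rpow_neg_half :
    IntervalIntegrable (fun t : ℝ => (1 - t) ^ (-(1 / 2) : ℝ)) volume 0 1 := by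
  simpa using ((intervalIntegral.intervalIntegrable_rpow' (a := 0) (b := 1)
    (by norm_num : (-1 : ℝ) < -(1 / 2))).comp_sub_left 1).symm

theorem integral_one_sub_rpow_neg_half : ∫ t in (0 : ℝ)..1, (1 - t) ^ (-(1 / 2) : ℝ) = 2 := by
  rw [intervalIntegral.integral_comp_sub_left (fun s : ℝ => s ^ (-(1 / 2) : ℝ)) 1]
  norm_num [integral_rpow]

section RadialGrowth

variable {V W : Type*} [NormedAddCommGroup V] [NormedSpace ℂ V]
  [NormedAddCommGroup W] [NormedSpace ℂ W] [CompleteSpace W]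

theorem norm_deriv_le_of_norm_smul_deriv_le {G : ℂ → W} {Ω : Set ℂ} (hΩ : IsOpen Ω)
    (hG : DifferentiableOn ℂ G Ω) {r A : ℝ} (hr : 0 < r) (hrΩ : closedBall 0 r ⊆ Ω)
    (hA : ∀ a ∈ sphere (0 : ℂ) r, ‖a • deriv G a‖ ≤ A) {a : ℂ} (ha : a ∈ closedBall 0 r) :
    ‖deriv G a‖ ≤ A / r := by
  have hG' : DifferentiableOn ℂ (deriv G) Ω := (hG.analyticOnNhd hΩ).deriv.differentiableOn
  refine Complex.norm_le_of_forall_mem_frontier_norm_le isBounded_ball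
    (hG'.mono (closure_ball_subset_closedBall.trans hrΩ)).diffContOnCl (fun b hb => ?_)
    (by rwa [closure_ball 0 hr.ne'])
  rw [frontier_ball 0 hr.ne'] at hb
  have := hA b hb
  rw [norm_smul, mem_sphere_zero_iff_norm.1 hb] at this
  rwa [le_div_iff₀' hr]

variable {G : ℂ → W} {Ω : Set ℂ} {A B : ℝ}

/- Near `0` a bound on `a • deriv G a` says nothing about `deriv G a`; there the maximum principle
on the circle `‖a‖ = 1/2` takes over. -/
theorem norm_deriv_ofReal_le (hΩ : IsOpen Ω) (hG : DifferentiableOn ℂ G Ω)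
    (hdisc : closedBall 0 1 ⊆ Ω) (hA : ∀ a ∈ sphere (0 : ℂ) (1 / 2), ‖a • deriv G a‖ ≤ A)
    (hB : ∀ t ∈ Ico (1 / 2 : ℝ) 1, √(1 - t) * ‖(t : ℂ) • deriv G t‖ ≤ B)
    {t : ℝ} (ht : t ∈ Ioo (0 : ℝ) 1) :
    ‖deriv G t‖ ≤ 2 * A + 2 * B * (1 - t) ^ (-(1 / 2) : ℝ) := by
  obtain ⟨ht0, ht1⟩ := ht
  have hA0 : 0 ≤ A := (norm_nonneg _).trans (hA (1 / 2) (by norm_num))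
  have hB0 : 0 ≤ B := (mul_nonneg (sqrt_nonneg _) (norm_nonneg _)).trans (hB (1 / 2) (by norm_num))
  have hrpow : 0 ≤ (1 - t) ^ (-(1 / 2) : ℝ) := by positivity
  rcases le_or_gt t (1 / 2) with hsmall | hlarge
  · have := norm_deriv_le_of_norm_smul_deriv_le hΩ hG (by norm_num)
      ((closedBall_subset_closedBall (by norm_num)).trans hdisc) hA (a := t)
      (by simp [abs_of_pos ht0]; linarith)
    nlinarith
  · have hs : 0 < √(1 - t) := sqrt_pos.2 (by linarith)
    have ht := hB t ⟨hlarge.le, ht1⟩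
    rw [norm_smul, norm_real, norm_of_nonneg ht0.le] at ht
    have : ‖deriv G t‖ ≤ 2 * B * (√(1 - t))⁻¹ := by
      rw [le_mul_inv_iff₀ hs]
      nlinarith [norm_nonneg (deriv G t)]
    rw [rpow_neg (by linarith), ← sqrt_eq_rpow]
    linarith

theorem norm_sub_le_of_norm_smul_deriv_le (hΩ : IsOpen Ω) (hG : DifferentiableOn ℂ G Ω)
    (hdisc : closedBall 0 1 ⊆ Ω) (hA : ∀ a ∈ sphere (0 : ℂ) (1 / 2), ‖a • deriv G a‖ ≤ A)
    (hB : ∀ t ∈ Ico (1 / 2 : ℝ) 1, √(1 - t) * ‖(t : ℂ) • deriv G t‖ ≤ B) :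
    ‖G 1 - G 0‖ ≤ 2 * A + 4 * B := by
  have hmem : ∀ t ∈ uIcc (0 : ℝ) 1, (t : ℂ) ∈ Ω := fun t ht => by
    rw [uIcc_of_le zero_le_one] at ht
    exact hdisc (by simp [abs_of_nonneg ht.1, ht.2])
  have hftc : ∫ t in (0 : ℝ)..1, deriv G t = G 1 - G 0 := by
    have hcont : ContinuousOn (fun t : ℝ => deriv G t) (uIcc 0 1) :=
      (hG.analyticOnNhd hΩ).deriv.continuousOn.comp continuous_ofReal.continuousOn hmem
    rw [intervalIntegral.integral_eq_sub_of_hasDerivAt (f := fun t : ℝ => G t)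
      (fun t ht => by
        have := (hG.differentiableAt (hΩ.mem_nhds (hmem t ht))).hasDerivAt.scomp t
          ofRealCLM.hasDerivAt
        rwa [ofRealCLM_apply, ofReal_one, one_smul] at this)
      hcont.intervalIntegrable]
    simp
  have hbound := intervalIntegrable_one_sub_rpow_neg_half.const_mul (2 * B)
  calc ‖G 1 - G 0‖ = ‖∫ t in (0 : ℝ)..1, deriv G t‖ := by rw [hftc]
    _ ≤ ∫ t in (0 : ℝ)..1, (2 * A + 2 * B * (1 - t) ^ (-(1 / 2) : ℝ)) := by
      refine intervalIntegral.norm_integral_le_of_norm_le zero_le_one ?_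
        (intervalIntegrable_const.add hbound)
      filter_upwards [(countable_singleton (1 : ℝ)).ae_notMem volume] with t ht1 ht
      exact norm_deriv_ofReal_le hΩ hG hdisc hA hB ⟨ht.1, lt_of_le_of_ne ht.2 ht1⟩
    _ = 2 * A + 4 * B := by
      rw [intervalIntegral.integral_add intervalIntegrable_const hbound,
        intervalIntegral.integral_const, intervalIntegral.integral_const_mul,
        integral_one_sub_rpow_neg_half]
      norm_num
      ring

theorem norm_sub_le_of_norm_fderiv_apply_self_le {h : V → W}
    (hh : DifferentiableOn ℂ h (ball 0 1)) {z : V} (hz : z ∈ ball (0 : V) 1)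
    (hA : ∀ w : V, ‖w‖ ≤ 1 / 2 → ‖fderiv ℂ h w w‖ ≤ A)
    (hB : ∀ t ∈ Ico (1 / 2 : ℝ) 1, √(1 - t) * ‖fderiv ℂ h ((t : ℂ) • z) ((t : ℂ) • z)‖ ≤ B) :
    ‖h z - h 0‖ ≤ 2 * A + 4 * B := by
  set Ω : Set ℂ := (· • z) ⁻¹' ball 0 1
  have hdisc : closedBall (0 : ℂ) 1 ⊆ Ω := fun a ha => by
    rw [mem_closedBall_zero_iff] at ha
    rw [mem_ball_zero_iff] at hz
    simp only [Ω, mem_preimage, mem_ball_zero_iff, norm_smul]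
    nlinarith [norm_nonneg z]
  have hslice : ∀ a ∈ Ω, HasDerivAt (fun b : ℂ => h (b • z)) (fderiv ℂ h (a • z) z) a :=
    fun a ha => by
      simpa using hasDerivAt_comp_add_smul (w := (0 : V)) (v := z) (a := a)
        (by simpa using hh.differentiableAt (isOpen_ball.mem_nhds ha))
  have hradial : ∀ a ∈ Ω, a • deriv (fun b : ℂ => h (b • z)) a = fderiv ℂ h (a • z) (a • z) :=
    fun a ha => by rw [(hslice a ha).deriv, map_smul]
  have := norm_sub_le_of_norm_smul_deriv_le (G := fun b : ℂ => h (b • z))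
    (isOpen_ball.preimage (continuous_id.smul continuous_const))
    (fun a ha => (hslice a ha).differentiableAt.differentiableWithinAt) hdisc
    (fun a ha => by
      rw [hradial a (hdisc (sphere_subset_closedBall.trans
        (closedBall_subset_closedBall (by norm_num)) ha))]
      refine hA _ ?_
      rw [norm_smul, mem_sphere_zero_iff_norm.1 ha]
      rw [mem_ball_zero_iff] at hz
      nlinarith [norm_nonneg z])
    (fun t ht => by
      rw [hradial t (hdisc (by simp [abs_of_pos (by linarith [ht.1] : (0 : ℝ) < t), ht.2.le]))]
      exact hB t ht)
  simpa using this

end RadialGrowth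


section RadialDerivative

variable {n : ℕ}

theorem rad_eq_fderiv_apply (f : E n → ℂ) (z : E n) : rad n f z = fderiv ℂ f z z := by
  conv_rhs => arg 2; rw [← (EuclideanSpace.basisFun (Fin n) ℂ).sum_repr z]
  simp [rad, smul_eq_mul]

theorem rad_apply_zero (f : E n → ℂ) : rad n f 0 = 0 := by
  simp [rad]

theorem rad_const (c : ℂ) : rad n (fun _ => c) = fun _ => 0 := by
  funext z
  simp [rad]

theorem differentiableOn_rad {f : E n → ℂ} {U : Set (E n)} (hf : DifferentiableOn ℂ f U)
    (hU : IsOpen U) : DifferentiableOn ℂ (rad n f) U := fun _ hw =>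
  (DifferentiableAt.fun_sum fun j _ => (EuclideanSpace.proj j : E n →L[ℂ] ℂ).differentiableAt.mul
    (hf.differentiableAt_fderiv_apply hU hw _)).differentiableWithinAt

theorem rad_mul {f g : E n → ℂ} {z : E n} (hf : DifferentiableAt ℂ f z)
    (hg : DifferentiableAt ℂ g z) :
    rad n (fun w => f w * g w) z = f z * rad n g z + g z * rad n f z := by
  simp [rad_eq_fderiv_apply, fderiv_fun_mul hf hg]

theorem rad_rad_mul {f g : E n → ℂ} {U : Set (E n)} (hf : DifferentiableOn ℂ f U)
    (hg : DifferentiableOn ℂ g U) (hU : IsOpen U) {z : E n} (hz : z ∈ U) :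
    rad n (rad n (fun w => f w * g w)) z
      = f z * rad n (rad n g) z + 2 * (rad n f z * rad n g z) + g z * rad n (rad n f) z := by
  have hdiff {h : E n → ℂ} (hh : DifferentiableOn ℂ h U) : DifferentiableAt ℂ h z :=
    hh.differentiableAt (hU.mem_nhds hz)
  have hleibniz :
      rad n (fun w => f w * g w) =ᶠ[𝓝 z] fun w => f w * rad n g w + g w * rad n f w := by
    filter_upwards [hU.mem_nhds hz] with w hw
    exact rad_mul (hf.differentiableAt (hU.mem_nhds hw)) (hg.differentiableAt (hU.mem_nhds hw))
  have hRf := hdiff (differentiableOn_rad hf hU)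
  have hRg := hdiff (differentiableOn_rad hg hU)
  rw [rad_eq_fderiv_apply, hleibniz.fderiv_eq, fderiv_fun_add ((hdiff hf).fun_mul hRg)
    ((hdiff hg).fun_mul hRf), fderiv_fun_mul (hdiff hf) hRg, fderiv_fun_mul (hdiff hg) hRf]
  simp only [add_apply, smul_apply, smul_eq_mul, ← rad_eq_fderiv_apply]
  ring

end RadialDerivative

section ZygmundGrowth

variable {n : ℕ}

theorem sqrt_one_sub_mul_sqrt_one_sub_le {t r : ℝ} (ht : t ∈ Icc (0 : ℝ) 1)
    (hr : r ∈ Icc (0 : ℝ) 1) : √(1 - t) * √(1 - r) ≤ 1 - (t * r) ^ 2 := by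
  have hamgm := two_mul_le_add_sq (√(1 - t)) (√(1 - r))
  rw [sq_sqrt (by linarith [ht.2]), sq_sqrt (by linarith [hr.2])] at hamgm
  have htr : t * r ≤ 1 := mul_le_one₀ ht.2 hr.1 hr.2
  nlinarith [mul_nonneg ht.1 hr.1, mul_le_of_le_one_right ht.1 hr.2,
    mul_le_of_le_one_left hr.1 ht.2]

theorem sqrt_mul_norm_rad_le {f : E n → ℂ} (hf : DifferentiableOn ℂ f (uball n)) {S : ℝ}
    (hS : ∀ w ∈ uball n, (1 - ‖w‖ ^ 2) * ‖rad n (rad n f) w‖ ≤ S) {z : E n} (hz : z ∈ uball n) :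
    √(1 - ‖z‖) * ‖rad n f z‖ ≤ 8 * S := by
  have hr : ‖z‖ < 1 := mem_ball_zero_iff.1 hz
  have hS0 : 0 ≤ S := (by simpa using hS 0 (mem_ball_self one_pos) :).trans' (by positivity)
  have hsr : 0 < √(1 - ‖z‖) := sqrt_pos.2 (by linarith)
  have hgrowth := norm_sub_le_of_norm_fderiv_apply_self_le (differentiableOn_rad hf isOpen_ball) hz
    (A := 2 * S) (B := S / √(1 - ‖z‖)) (fun w hw => by
      have := hS w (mem_ball_zero_iff.2 (by linarith))
      have hw2 : ‖w‖ ^ 2 ≤ 1 / 4 := by nlinarith [norm_nonneg w]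
      rw [← rad_eq_fderiv_apply]
      nlinarith [mul_le_mul_of_nonneg_right hw2 (norm_nonneg (rad n (rad n f) w))])
    (fun t ht => by
      have htz : ‖(t : ℂ) • z‖ = t * ‖z‖ := by
        rw [norm_smul, norm_real, norm_of_nonneg (by linarith [ht.1])]
      have := hS _ (mem_ball_zero_iff.2 (by rw [htz]; nlinarith [ht.2, norm_nonneg z]))
      rw [htz] at this
      rw [← rad_eq_fderiv_apply, le_div_iff₀ hsr]
      have hsq := sqrt_one_sub_mul_sqrt_one_sub_le ⟨by linarith [ht.1], ht.2.le⟩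
        ⟨norm_nonneg z, hr.le⟩
      nlinarith [norm_nonneg (rad n (rad n f) ((t : ℂ) • z))])
  rw [rad_apply_zero, sub_zero] at hgrowth
  have hsr1 : √(1 - ‖z‖) ≤ 1 := sqrt_le_one.2 (by linarith [norm_nonneg z])
  calc √(1 - ‖z‖) * ‖rad n f z‖ ≤ √(1 - ‖z‖) * (2 * (2 * S) + 4 * (S / √(1 - ‖z‖))) := by gcongr
    _ = √(1 - ‖z‖) * (4 * S) + 4 * S := by field_simp; ring
    _ ≤ 8 * S := by nlinarith

theorem norm_sub_le_of_sqrt_mul_norm_rad_le {f : E n → ℂ} (hf : DifferentiableOn ℂ f (uball n))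
    {T : ℝ} (hT : ∀ w ∈ uball n, √(1 - ‖w‖) * ‖rad n f w‖ ≤ T) {z : E n} (hz : z ∈ uball n) :
    ‖f z - f 0‖ ≤ 8 * T := by
  have hr : ‖z‖ < 1 := mem_ball_zero_iff.1 hz
  have hgrowth := norm_sub_le_of_norm_fderiv_apply_self_le hf hz (A := 2 * T) (B := T)
    (fun w hw => by
      have := hT w (mem_ball_zero_iff.2 (by linarith))
      have hsw : 1 / 2 ≤ √(1 - ‖w‖) := le_sqrt_of_sq_le (by nlinarith [norm_nonneg w])
      rw [← rad_eq_fderiv_apply]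
      nlinarith [mul_le_mul_of_nonneg_right hsw (norm_nonneg (rad n f w))])
    (fun t ht => by
      have htz : ‖(t : ℂ) • z‖ = t * ‖z‖ := by
        rw [norm_smul, norm_real, norm_of_nonneg (by linarith [ht.1])]
      have htz1 : t * ‖z‖ < 1 := by nlinarith [ht.2, norm_nonneg z]
      have := hT _ (mem_ball_zero_iff.2 (htz ▸ htz1))
      rw [htz] at this
      rw [← rad_eq_fderiv_apply]
      refine le_trans ?_ this
      gcongr
      nlinarith [ht.1, ht.2, norm_nonneg z])
  linarith

theorem norm_le_of_zygmund_bound {f : E n → ℂ} (hf : DifferentiableOn ℂ f (uball n)) {S : ℝ}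
    (hS : ∀ w ∈ uball n, (1 - ‖w‖ ^ 2) * ‖rad n (rad n f) w‖ ≤ S) {z : E n} (hz : z ∈ uball n) :
    ‖f z‖ ≤ ‖f 0‖ + 64 * S := by
  have := norm_sub_le_of_sqrt_mul_norm_rad_le hf (fun w hw => sqrt_mul_norm_rad_le hf hS hw) hz
  linarith [norm_sub_norm_le (f z) (f 0)]

end ZygmundGrowth

section ZygmundSpace

variable {n : ℕ}

theorem mul_norm_rad_rad_mul_le {f g : E n → ℂ} (hf : DifferentiableOn ℂ f (uball n))
    (hg : DifferentiableOn ℂ g (uball n)) {Sf Sg : ℝ}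
    (hSf : ∀ w ∈ uball n, (1 - ‖w‖ ^ 2) * ‖rad n (rad n f) w‖ ≤ Sf)
    (hSg : ∀ w ∈ uball n, (1 - ‖w‖ ^ 2) * ‖rad n (rad n g) w‖ ≤ Sg) {z : E n} (hz : z ∈ uball n) :
    (1 - ‖z‖ ^ 2) * ‖rad n (rad n (fun w => g w * f w)) z‖ ≤ (‖g 0‖ + 385 * Sg) * (‖f 0‖ + Sf) := by
  have hr : ‖z‖ < 1 := mem_ball_zero_iff.1 hz
  have hr2 : 0 ≤ 1 - ‖z‖ ^ 2 := by nlinarith [norm_nonneg z]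
  have hSf0 : 0 ≤ Sf := (by simpa using hSf 0 (mem_ball_self one_pos) :).trans' (by positivity)
  have hSg0 : 0 ≤ Sg := (by simpa using hSg 0 (mem_ball_self one_pos) :).trans' (by positivity)
  have hgz := norm_le_of_zygmund_bound hg hSg hz
  have hfz := norm_le_of_zygmund_bound hf hSf hz
  have hRg := sqrt_mul_norm_rad_le hg hSg hz
  have hRf := sqrt_mul_norm_rad_le hf hSf hz
  -- `1 - ‖z‖²` splits as `(1 + ‖z‖) √(1 - ‖z‖) √(1 - ‖z‖)`, one root for each first derivative.
  have hmid : (1 - ‖z‖ ^ 2) * ‖2 * (rad n g z * rad n f z)‖ ≤ 256 * Sg * Sf := by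
    have hsplit : 1 - ‖z‖ ^ 2 = (1 + ‖z‖) * (√(1 - ‖z‖) * √(1 - ‖z‖)) := by
      rw [mul_self_sqrt (by linarith)]; ring
    rw [norm_mul, norm_mul, show ‖(2 : ℂ)‖ = 2 by norm_num, hsplit]
    calc (1 + ‖z‖) * (√(1 - ‖z‖) * √(1 - ‖z‖)) * (2 * (‖rad n g z‖ * ‖rad n f z‖))
        = 2 * (1 + ‖z‖) * ((√(1 - ‖z‖) * ‖rad n g z‖) * (√(1 - ‖z‖) * ‖rad n f z‖)) := by ring
      _ ≤ 2 * 2 * ((8 * Sg) * (8 * Sf)) := by gcongr; linarith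
      _ = 256 * Sg * Sf := by ring
  have hfirst : (1 - ‖z‖ ^ 2) * ‖g z * rad n (rad n f) z‖ ≤ (‖g 0‖ + 64 * Sg) * Sf := by
    rw [norm_mul, mul_left_comm]
    exact mul_le_mul hgz (hSf z hz) (by positivity) (by positivity)
  have hlast : (1 - ‖z‖ ^ 2) * ‖f z * rad n (rad n g) z‖ ≤ (‖f 0‖ + 64 * Sf) * Sg := by
    rw [norm_mul, mul_left_comm]
    exact mul_le_mul hfz (hSg z hz) (by positivity) (by positivity)
  rw [rad_rad_mul hg hf isOpen_ball hz]
  refine (mul_le_mul_of_nonneg_left norm_add₃_le hr2).trans ?_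
  rw [mul_add, mul_add]
  nlinarith [mul_nonneg hSg0 hSf0, mul_nonneg hSg0 (norm_nonneg (f 0)),
    mul_nonneg (norm_nonneg (g 0)) (norm_nonneg (f 0))]

theorem le_sSup_zygSet {f : E n → ℂ} (hf : memZ n f) {z : E n} (hz : z ∈ uball n) :
    (1 - ‖z‖ ^ 2) * ‖rad n (rad n f) z‖ ≤ sSup (zygSet n f) :=
  le_csSup hf ⟨z, hz, rfl⟩

theorem sSup_zygSet_nonneg {f : E n → ℂ} (hf : memZ n f) : 0 ≤ sSup (zygSet n f) :=
  (le_sSup_zygSet hf (mem_ball_self one_pos)).trans' (by simp)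

theorem zygSet_nonempty (f : E n → ℂ) : (zygSet n f).Nonempty :=
  ⟨_, 0, mem_ball_self one_pos, rfl⟩

theorem memZ_const (c : ℂ) : memZ n (fun _ => c) := by
  refine ⟨0, ?_⟩
  rintro _ ⟨z, -, rfl⟩
  rw [rad_const, rad_const]
  simp

theorem zygNorm_mul_mem_upperBounds {f g : E n → ℂ} (hf : DifferentiableOn ℂ f (uball n))
    (hg : DifferentiableOn ℂ g (uball n)) (hfZ : memZ n f) (hgZ : memZ n g) :
    (‖g 0‖ + 385 * sSup (zygSet n g)) * zygNorm n f
      ∈ upperBounds (zygSet n (fun z => g z * f z)) := by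
  rintro _ ⟨z, hz, rfl⟩
  exact mul_norm_rad_rad_mul_le hf hg (fun w hw => le_sSup_zygSet hfZ hw)
    (fun w hw => le_sSup_zygSet hgZ hw) hz

theorem zygNorm_mul_le {f g : E n → ℂ} (hf : DifferentiableOn ℂ f (uball n))
    (hg : DifferentiableOn ℂ g (uball n)) (hfZ : memZ n f) (hgZ : memZ n g) :
    zygNorm n (fun z => g z * f z) ≤ (2 * ‖g 0‖ + 385 * sSup (zygSet n g)) * zygNorm n f := by
  have hsup := csSup_le (zygSet_nonempty _) (zygNorm_mul_mem_upperBounds hf hg hfZ hgZ)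
  have hf0 : ‖f 0‖ ≤ zygNorm n f := le_add_of_nonneg_right (sSup_zygSet_nonneg hfZ)
  rw [zygNorm, norm_mul]
  nlinarith [mul_le_mul_of_nonneg_left hf0 (norm_nonneg (g 0))]

end ZygmundSpace

theorem Mg_bounded_iff_memZ_general (n : ℕ) (g : E n → ℂ)
    (hg : DifferentiableOn ℂ g (uball n)) :
    (∃ C > (0:ℝ), ∀ f : E n → ℂ, DifferentiableOn ℂ f (uball n) → memZ n f →
      memZ n (fun z => g z * f z) ∧ zygNorm n (fun z => g z * f z) ≤ C * zygNorm n f)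
    ↔ memZ n g := by
  constructor
  · rintro ⟨C, -, hC⟩
    simpa using (hC (fun _ => 1) (differentiableOn_const 1) (memZ_const 1)).1
  · intro hgZ
    have hSg := sSup_zygSet_nonneg hgZ
    refine ⟨2 * ‖g 0‖ + 385 * sSup (zygSet n g) + 1, by positivity, fun f hf hfZ =>
      ⟨⟨_, zygNorm_mul_mem_upperBounds hf hg hfZ hgZ⟩, (zygNorm_mul_le hf hg hfZ hgZ).trans ?_⟩⟩
    have hfN : 0 ≤ zygNorm n f := add_nonneg (norm_nonneg _) (sSup_zygSet_nonneg hfZ)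
    nlinarith

/-- **Corollary.** The multiplication operator `M_g` is bounded on the Zygmund space
if and only if `g ∈ 𝒵`. -/
theorem Mg_bounded_iff_memZ (n : ℕ) (hn : 1 ≤ n) (g : E n → ℂ)
    (hg : DifferentiableOn ℂ g (uball n)) :
    (∃ C > (0:ℝ), ∀ f : E n → ℂ, DifferentiableOn ℂ f (uball n) → memZ n f →
      memZ n (fun z => g z * f z) ∧ zygNorm n (fun z => g z * f z) ≤ C * zygNorm n f)
    ↔ memZ n g :=
  Mg_bounded_iff_memZ_general n g hg
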